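/- (Certified p-value lower bound on a triangle) Fix observed outcome r̂ and a triangle T = conv{w⁽¹⁾,w⁽²⁾,w⁽³⁾} ⊂ ℝ². Let g_{r;r̂}(u,v) = (r₁−r̂₁)u + (r₂−r̂₂)v − (log κ(r̂) − log κ(r)), I_T := {r ∈ Δ_{3,n} : g_{r;r̂}(w⁽ʲ⁾) ≤ 0 for all j}, and P̲_T(r) := min_j P_{p(w⁽ʲ⁾)}(r). Then for every (u,v) ∈ T, the exact p-value satisfies ρ_{r̂}(p(u,v)) ≥ Σ_{r ∈ I_T} P̲_T(r). -/

import Mathlib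

/-- Normalizing constant of the softmax map. -/
noncomputable def Z (u v : ℝ) : ℝ := 1 + Real.exp u + Real.exp v

/-- Softmax parametrization of the interior of the simplex `Δ₃`. -/
noncomputable def p3 (u v : ℝ) : Fin 3 → ℝ :=
  ![Real.exp u / Z u v, Real.exp v / Z u v, 1 / Z u v]

/-- Multinomial probability of count vector `r` under `p(u,v)`. -/
noncomputable def P3 (u v : ℝ) (r : Fin 3 → ℕ) : ℝ :=
  (Nat.multinomial Finset.univ r : ℝ) * ∏ i, p3 u v i ^ r i

/-- Exact p-value of the observed outcome `rhat` at the parameter `p(u,v)`. -/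
noncomputable def pval3 (n : ℕ) (rhat : Fin 3 → ℕ) (u v : ℝ) : ℝ :=
  ∑ r ∈ (Finset.Nat.antidiagonalTuple 3 n).filter (fun r => P3 u v r ≤ P3 u v rhat),
    P3 u v r

/-- The affine likelihood-ordering function `g_{r;r̂}` in log-odds coordinates. -/
noncomputable def gfun (r rhat : Fin 3 → ℕ) (w : ℝ × ℝ) : ℝ :=
  ((r 0 : ℝ) - (rhat 0 : ℝ)) * w.1 + ((r 1 : ℝ) - (rhat 1 : ℝ)) * w.2
    - (Real.log (Nat.multinomial Finset.univ rhat : ℝ)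
        - Real.log (Nat.multinomial Finset.univ r : ℝ))

lemma Zpos (u v : ℝ) : 0 < Z u v := by unfold Z; positivity

lemma multinomial_cast_pos (r : Fin 3 → ℕ) :
    (0:ℝ) < (Nat.multinomial Finset.univ r : ℝ) := by
  exact_mod_cast Nat.multinomial_pos _ _

lemma P3_eq (u v : ℝ) (r : Fin 3 → ℕ) (n : ℕ) (hr : ∑ i, r i = n) :
    P3 u v r = (Nat.multinomial Finset.univ r : ℝ) *
      Real.exp ((r 0 : ℝ) * u + (r 1 : ℝ) * v) / Z u v ^ n := by
  have hZ := Zpos u v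
  unfold P3 p3
  rw [Fin.prod_univ_three]
  rw [Fin.sum_univ_three] at hr
  simp only [Matrix.cons_val_zero, Matrix.cons_val_one, Matrix.head_cons,
    Matrix.cons_val_two, Matrix.tail_cons]
  rw [div_pow, div_pow, div_pow, one_pow, ← Real.exp_nat_mul, ← Real.exp_nat_mul,
    ← hr, pow_add, pow_add, Real.exp_add]
  field_simp

lemma P3_nonneg (u v : ℝ) (r : Fin 3 → ℕ) : 0 ≤ P3 u v r := by
  unfold P3
  apply mul_nonneg (by positivity)
  apply Finset.prod_nonneg
  intro i _
  apply pow_nonneg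
  have hZ := Zpos u v
  fin_cases i <;> simp [p3] <;> positivity

/-- Halfspace lemma. -/
lemma halfspace (u v : ℝ) (r rhat : Fin 3 → ℕ) (n : ℕ) (hr : ∑ i, r i = n)
    (hrh : ∑ i, rhat i = n) (hg : gfun r rhat (u, v) ≤ 0) :
    P3 u v r ≤ P3 u v rhat := by
  have hZ := Zpos u v
  rw [P3_eq u v r n hr, P3_eq u v rhat n hrh]
  have hCr := multinomial_cast_pos r
  have hCrh := multinomial_cast_pos rhat
  have key : (Nat.multinomial Finset.univ r : ℝ) * Real.exp ((r 0:ℝ)*u + (r 1:ℝ)*v)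
      ≤ (Nat.multinomial Finset.univ rhat : ℝ) * Real.exp ((rhat 0:ℝ)*u + (rhat 1:ℝ)*v) := by
    rw [← Real.exp_log hCr, ← Real.exp_log hCrh, ← Real.exp_add, ← Real.exp_add,
      Real.exp_le_exp]
    simp only [gfun] at hg
    linarith
  gcongr

/-- The halfspace `g ≤ 0` propagates to the convex hull. -/
lemma gfun_hull (r rhat : Fin 3 → ℕ) (w : Fin 3 → ℝ × ℝ)
    (h : ∀ j, gfun r rhat (w j) ≤ 0) {x : ℝ × ℝ}
    (hx : x ∈ convexHull ℝ (Set.range w)) : gfun r rhat x ≤ 0 := by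
  have hconv : Convex ℝ {p : ℝ × ℝ | gfun r rhat p ≤ 0} := by
    intro p hp q hq t s ht hs hts
    simp only [Set.mem_setOf_eq, gfun] at *
    simp only [Prod.fst_add, Prod.snd_add, Prod.smul_fst, Prod.smul_snd, smul_eq_mul]
    have e1 : t * (((r 0 : ℝ) - (rhat 0 : ℝ)) * p.1 + ((r 1 : ℝ) - (rhat 1 : ℝ)) * p.2
        - (Real.log (Nat.multinomial Finset.univ rhat : ℝ)
          - Real.log (Nat.multinomial Finset.univ r : ℝ))) ≤ 0 :=
      mul_nonpos_of_nonneg_of_nonpos ht hp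
    have e2 : s * (((r 0 : ℝ) - (rhat 0 : ℝ)) * q.1 + ((r 1 : ℝ) - (rhat 1 : ℝ)) * q.2
        - (Real.log (Nat.multinomial Finset.univ rhat : ℝ)
          - Real.log (Nat.multinomial Finset.univ r : ℝ))) ≤ 0 :=
      mul_nonpos_of_nonneg_of_nonpos hs hq
    have e3 : (t + s) * (Real.log (Nat.multinomial Finset.univ rhat : ℝ)
        - Real.log (Nat.multinomial Finset.univ r : ℝ))
        = (Real.log (Nat.multinomial Finset.univ rhat : ℝ)
        - Real.log (Nat.multinomial Finset.univ r : ℝ)) := by rw [hts, one_mul]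
    nlinarith [e1, e2, e3]
  exact convexHull_min (Set.range_subset_iff.2 h) hconv hx

/-- Hölder-type inequality for three positive terms. -/
lemma holder3 (a b : Fin 3 → ℝ) (ha : ∀ i, 0 < a i) (hb : ∀ i, 0 < b i) {t s : ℝ}
    (ht : 0 ≤ t) (hs : 0 ≤ s) (hts : t + s = 1) :
    ∑ i, a i ^ t * b i ^ s ≤ (∑ i, a i) ^ t * (∑ i, b i) ^ s := by
  set A := ∑ i, a i with hA
  set B := ∑ i, b i with hB
  have hApos : 0 < A := Finset.sum_pos (fun i _ => ha i) ⟨0, Finset.mem_univ 0⟩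
  have hBpos : 0 < B := Finset.sum_pos (fun i _ => hb i) ⟨0, Finset.mem_univ 0⟩
  have hpos : 0 < A ^ t * B ^ s :=
    mul_pos (Real.rpow_pos_of_pos hApos t) (Real.rpow_pos_of_pos hBpos s)
  have key : ∀ i : Fin 3, a i ^ t * b i ^ s ≤ A ^ t * B ^ s * (t * (a i / A) + s * (b i / B)) := by
    intro i
    have h1 : a i ^ t * b i ^ s = A ^ t * B ^ s * ((a i / A) ^ t * (b i / B) ^ s) := by
      rw [Real.div_rpow (le_of_lt (ha i)) (le_of_lt hApos),
        Real.div_rpow (le_of_lt (hb i)) (le_of_lt hBpos)]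
      have h1' : A ^ t ≠ 0 := ne_of_gt (Real.rpow_pos_of_pos hApos t)
      have h2' : B ^ s ≠ 0 := ne_of_gt (Real.rpow_pos_of_pos hBpos s)
      field_simp
    have h2 := Real.geom_mean_le_arith_mean2_weighted ht hs
      (div_nonneg (le_of_lt (ha i)) (le_of_lt hApos))
      (div_nonneg (le_of_lt (hb i)) (le_of_lt hBpos)) hts
    rw [h1]
    exact mul_le_mul_of_nonneg_left h2 (le_of_lt hpos)
  have hAeq : a 0 + a 1 + a 2 = A := by rw [hA, Fin.sum_univ_three]
  have hBeq : b 0 + b 1 + b 2 = B := by rw [hB, Fin.sum_univ_three]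
  have step1 : ∑ i, a i ^ t * b i ^ s
      ≤ ∑ i : Fin 3, A ^ t * B ^ s * (t * (a i / A) + s * (b i / B)) :=
    Finset.sum_le_sum (fun i _ => key i)
  have step2 : ∑ i : Fin 3, A ^ t * B ^ s * (t * (a i / A) + s * (b i / B))
      = A ^ t * B ^ s := by
    rw [Fin.sum_univ_three]
    have hA0 : A ≠ 0 := ne_of_gt hApos
    have hB0 : B ≠ 0 := ne_of_gt hBpos
    field_simp
    linear_combination (A * B) * hts
      + (B * t) * hAeq + (A * s) * hBeq
  linarith [step1, step2.le, step2.ge]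

lemma convexOn_logZ : ConvexOn ℝ Set.univ (fun w : ℝ × ℝ => Real.log (Z w.1 w.2)) := by
  refine ⟨convex_univ, ?_⟩
  intro x _ y _ t s ht hs hts
  have hZx := Zpos x.1 x.2
  have hZy := Zpos y.1 y.2
  have hZc := Zpos (t • x + s • y).1 (t • x + s • y).2
  simp only [smul_eq_mul]
  rw [Real.log_le_iff_le_exp hZc]
  have hrhs : Real.exp (t * Real.log (Z x.1 x.2) + s * Real.log (Z y.1 y.2))
      = Z x.1 x.2 ^ t * Z y.1 y.2 ^ s := by
    rw [Real.exp_add, Real.rpow_def_of_pos hZx, Real.rpow_def_of_pos hZy]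
    ring_nf
  rw [hrhs]
  have key := holder3 ![1, Real.exp x.1, Real.exp x.2] ![1, Real.exp y.1, Real.exp y.2]
    (by intro i; fin_cases i <;> simp <;> positivity)
    (by intro i; fin_cases i <;> simp <;> positivity) ht hs hts
  rw [Fin.sum_univ_three, Fin.sum_univ_three, Fin.sum_univ_three] at key
  simp only [Matrix.cons_val_zero, Matrix.cons_val_one, Matrix.head_cons,
    Matrix.cons_val_two, Matrix.tail_cons] at key
  have h1 : (1:ℝ) ^ t * (1:ℝ) ^ s = 1 := by
    rw [Real.one_rpow, Real.one_rpow, mul_one]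
  have h2 : Real.exp x.1 ^ t * Real.exp y.1 ^ s = Real.exp (t * x.1 + s * y.1) := by
    rw [← Real.exp_mul, ← Real.exp_mul, ← Real.exp_add]; ring_nf
  have h3 : Real.exp x.2 ^ t * Real.exp y.2 ^ s = Real.exp (t * x.2 + s * y.2) := by
    rw [← Real.exp_mul, ← Real.exp_mul, ← Real.exp_add]; ring_nf
  rw [h1, h2, h3] at key
  have hc : Z (t • x + s • y).1 (t • x + s • y).2
      = 1 + Real.exp (t * x.1 + s * y.1) + Real.exp (t * x.2 + s * y.2) := by
    simp [Z, Prod.fst_add, Prod.snd_add, Prod.smul_fst, Prod.smul_snd, smul_eq_mul]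
  rw [hc]
  calc 1 + Real.exp (t * x.1 + s * y.1) + Real.exp (t * x.2 + s * y.2)
      ≤ (1 + Real.exp x.1 + Real.exp x.2) ^ t * (1 + Real.exp y.1 + Real.exp y.2) ^ s := key
    _ = Z x.1 x.2 ^ t * Z y.1 y.2 ^ s := by unfold Z; ring_nf

/-- Log of `P3` as a function on log-odds space. -/
noncomputable def logP3 (n : ℕ) (r : Fin 3 → ℕ) (w : ℝ × ℝ) : ℝ :=
  Real.log (Nat.multinomial Finset.univ r : ℝ) + ((r 0 : ℝ) * w.1 + (r 1 : ℝ) * w.2)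
    - (n : ℝ) * Real.log (Z w.1 w.2)

lemma P3_eq_exp_logP3 (u v : ℝ) (r : Fin 3 → ℕ) (n : ℕ) (hr : ∑ i, r i = n) :
    P3 u v r = Real.exp (logP3 n r (u, v)) := by
  have hZ := Zpos u v
  have hC := multinomial_cast_pos r
  rw [P3_eq u v r n hr]
  unfold logP3
  dsimp only
  have hnum : Real.exp (Real.log (Nat.multinomial Finset.univ r : ℝ)
      + ((r 0:ℝ) * u + (r 1:ℝ) * v))
      = (Nat.multinomial Finset.univ r : ℝ) * Real.exp ((r 0:ℝ) * u + (r 1:ℝ) * v) := by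
    rw [Real.exp_add, Real.exp_log hC]
  have hden : Real.exp ((n:ℝ) * Real.log (Z u v)) = Z u v ^ n := by
    rw [Real.exp_nat_mul, Real.exp_log hZ]
  rw [Real.exp_sub, hnum, hden]

lemma concaveOn_logP3 (n : ℕ) (r : Fin 3 → ℕ) :
    ConcaveOn ℝ Set.univ (logP3 n r) := by
  have haff : ConcaveOn ℝ Set.univ (fun w : ℝ × ℝ =>
      Real.log (Nat.multinomial Finset.univ r : ℝ) + ((r 0 : ℝ) * w.1 + (r 1 : ℝ) * w.2)) := by
    refine ⟨convex_univ, ?_⟩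
    intro x _ y _ t s ht hs hts
    simp only [Prod.fst_add, Prod.snd_add, Prod.smul_fst, Prod.smul_snd, smul_eq_mul]
    apply le_of_eq
    linear_combination (Real.log (Nat.multinomial Finset.univ r : ℝ)) * hts
  have hconv : ConvexOn ℝ Set.univ (fun w : ℝ × ℝ => (n : ℝ) * Real.log (Z w.1 w.2)) := by
    have := convexOn_logZ.smul (c := (n : ℝ)) (by positivity)
    simpa [smul_eq_mul] using this
  have := haff.sub hconv
  have heq : logP3 n r = (fun w : ℝ × ℝ =>
      Real.log (Nat.multinomial Finset.univ r : ℝ) + ((r 0 : ℝ) * w.1 + (r 1 : ℝ) * w.2)) -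
      (fun w : ℝ × ℝ => (n : ℝ) * Real.log (Z w.1 w.2)) := by
    funext w; simp only [logP3, Pi.sub_apply]
  rw [heq]; exact this

lemma min_le_P3 (n : ℕ) (r : Fin 3 → ℕ) (hr : ∑ i, r i = n) (w : Fin 3 → ℝ × ℝ)
    {x : ℝ × ℝ} (hx : x ∈ convexHull ℝ (Set.range w)) :
    (Finset.univ.inf' ⟨0, Finset.mem_univ 0⟩ fun j => P3 (w j).1 (w j).2 r)
      ≤ P3 x.1 x.2 r := by
  obtain ⟨y, hy, hle⟩ := (concaveOn_logP3 n r).exists_le_of_mem_convexHull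
    (Set.subset_univ _) hx
  obtain ⟨j, rfl⟩ := hy
  calc (Finset.univ.inf' ⟨0, Finset.mem_univ 0⟩ fun j => P3 (w j).1 (w j).2 r)
      ≤ P3 (w j).1 (w j).2 r := Finset.inf'_le _ (Finset.mem_univ j)
    _ = Real.exp (logP3 n r (w j)) := P3_eq_exp_logP3 _ _ r n hr
    _ ≤ Real.exp (logP3 n r x) := Real.exp_le_exp.2 hle
    _ = P3 x.1 x.2 r := (P3_eq_exp_logP3 x.1 x.2 r n hr).symm

/-- Certified p-value lower bound on a triangle: the sum of vertex-minimum
probabilities over the definitely-in-tail outcomes lower-bounds the exact p-value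
at every point of the triangle. -/
theorem pval_lower_bound_on_triangle (n : ℕ) (rhat : Fin 3 → ℕ)
    (hrhat : ∑ i, rhat i = n) (w : Fin 3 → ℝ × ℝ) :
    ∀ x ∈ convexHull ℝ (Set.range w),
      ∑ r ∈ (Finset.Nat.antidiagonalTuple 3 n).filter
          (fun r => ∀ j, gfun r rhat (w j) ≤ 0),
        (Finset.univ.inf' ⟨0, Finset.mem_univ 0⟩ fun j => P3 (w j).1 (w j).2 r)
      ≤ pval3 n rhat x.1 x.2 := by
  intro x hx
  have step1 : ∑ r ∈ (Finset.Nat.antidiagonalTuple 3 n).filter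
          (fun r => ∀ j, gfun r rhat (w j) ≤ 0),
        (Finset.univ.inf' ⟨0, Finset.mem_univ 0⟩ fun j => P3 (w j).1 (w j).2 r)
      ≤ ∑ r ∈ (Finset.Nat.antidiagonalTuple 3 n).filter
          (fun r => ∀ j, gfun r rhat (w j) ≤ 0), P3 x.1 x.2 r := by
    apply Finset.sum_le_sum
    intro r hr
    have hrn : ∑ i, r i = n :=
      (Finset.Nat.mem_antidiagonalTuple.1 (Finset.mem_filter.1 hr).1)
    exact min_le_P3 n r hrn w hx
  have step2 : ∑ r ∈ (Finset.Nat.antidiagonalTuple 3 n).filter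
          (fun r => ∀ j, gfun r rhat (w j) ≤ 0), P3 x.1 x.2 r
      ≤ pval3 n rhat x.1 x.2 := by
    unfold pval3
    apply Finset.sum_le_sum_of_subset_of_nonneg
    · intro r hr
      rw [Finset.mem_filter] at hr ⊢
      obtain ⟨hmem, hg⟩ := hr
      refine ⟨hmem, ?_⟩
      have hrn : ∑ i, r i = n := Finset.Nat.mem_antidiagonalTuple.1 hmem
      have hgx : gfun r rhat x ≤ 0 := gfun_hull r rhat w hg hx
      exact halfspace x.1 x.2 r rhat n hrn hrhat (by simpa using hgx)
    · intro r _ _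
      exact P3_nonneg x.1 x.2 r
  linarith
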